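/- A maniplex is isomorphic to the flag graph of an abstract polytope if and only if it satisfies the path intersection property (equivalently, the weak path intersection property). -/

import Mathlib

/-- An `n`-maniplex on vertex (flag) set `V`: a nonempty, connected, properly
`n`-edge-coloured simple `n`-regular graph (encoded by the fixed-point-free
involutions `σ i` giving the unique `i`-neighbour of each vertex) such that the
2-factors of colours `i`, `j` with `|i - j| > 1` are 4-cycles. -/
structure Maniplex (n : ℕ) (V : Type) where
  nonempty : Nonempty V
  σ : Fin n → V → V
  invol : ∀ i v, σ i (σ i v) = v
  nofix : ∀ i v, σ i v ≠ v
  conn : ∀ u v : V, Relation.ReflTransGen (fun x y => ∃ i, σ i x = y) u v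
  comm : ∀ i j : Fin n, (i : ℕ) + 1 < (j : ℕ) → ∀ v,
    σ i (σ j v) = σ j (σ i v) ∧ σ i v ≠ σ j v

namespace Maniplex

variable {n : ℕ} {V : Type}

/-- There is a path from `u` to `v` using only edges with colours in `A`. -/
def ReachIn (M : Maniplex n V) (A : Set (Fin n)) (u v : V) : Prop :=
  Relation.ReflTransGen (fun x y => ∃ i ∈ A, M.σ i x = y) u v

/-- The `i`-face of `M` containing `v`: the connected component of `v` in the
spanning subgraph with all edges of colour `i` deleted. -/
def face (M : Maniplex n V) (i : Fin n) (v : V) : Set V :=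
  {u | M.ReachIn {j | j ≠ i} v u}

/-- `S` is an `i`-face of `M`. -/
def IsFace (M : Maniplex n V) (i : Fin n) (S : Set V) : Prop :=
  ∃ v, S = M.face i v

end Maniplex
namespace Maniplex

variable {n : ℕ} {V : Type}

/-- The type of (proper) faces of a maniplex: a rank together with a face of that rank. -/
def FaceT (M : Maniplex n V) : Type := {F : Fin n × Set V // M.IsFace F.1 F.2}

/-- The order on faces: `F ≤ G` iff `rank F ≤ rank G` and `F ∩ G ≠ ∅`. -/
def faceLe (M : Maniplex n V) (F G : M.FaceT) : Prop :=
  F.1.1 ≤ G.1.1 ∧ (F.1.2 ∩ G.1.2).Nonempty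

/-- The faces of `M` together with adjoined minimum `none` and maximum `some none`. -/
def PFace (M : Maniplex n V) : Type := Option (Option M.FaceT)

/-- The order on `P_M` (with the improper minimum and maximum adjoined). -/
def ple (M : Maniplex n V) : M.PFace → M.PFace → Prop
  | none, _ => True
  | _, some none => True
  | some (some F), some (some G) => M.faceLe F G
  | _, _ => False

/-- The rank function of `P_M`. -/
def prank (M : Maniplex n V) : M.PFace → ℤ
  | none => -1
  | some none => (n : ℤ)
  | some (some F) => ((F.1.1 : ℕ) : ℤ)

/-- The component intersection property: for every chain of faces, the
intersection of the faces is a connected subgraph of `M`. -/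
def CIP (M : Maniplex n V) : Prop :=
  ∀ (k : ℕ) (r : Fin k → Fin n) (S : Fin k → Set V),
    (∀ a, M.IsFace (r a) (S a)) →
    (∀ a b, (S a ∩ S b).Nonempty) →
    ∀ u v : V, (∀ a, u ∈ S a) → (∀ a, v ∈ S a) →
      M.ReachIn {c | ∀ a, c ≠ r a} u v

/-- The diamond condition for the poset `P_M`. -/
def Diamond (M : Maniplex n V) : Prop :=
  ∀ (i : Fin n) (E F : M.PFace), M.ple E F →
    M.prank E = ((i : ℕ) : ℤ) - 1 → M.prank F = ((i : ℕ) : ℤ) + 1 →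
    ∃ H₁ H₂ : M.PFace, H₁ ≠ H₂ ∧
      ∀ H : M.PFace,
        (M.prank H = ((i : ℕ) : ℤ) ∧ M.ple E H ∧ M.ple H F) ↔ (H = H₁ ∨ H = H₂)

/-- A maximal chain of proper faces of `P_M`: one face of each rank,
pairwise incident. -/
def IsFlag (M : Maniplex n V) (S : Fin n → Set V) : Prop :=
  (∀ i, M.IsFace i (S i)) ∧ ∀ i j, ((S i) ∩ (S j)).Nonempty

/-- `P_M` is faithful: every maximal chain of proper faces has a unique common vertex. -/
def Faithful (M : Maniplex n V) : Prop :=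
  ∀ S : Fin n → Set V, M.IsFlag S → ∃! v : V, ∀ i, v ∈ S i

/-- Strong flag connectivity of `P_M`: any two maximal chains `Φ`, `Ψ` are joined
by a sequence of successively adjacent maximal chains all containing `Φ ∩ Ψ`. -/
def SFC (M : Maniplex n V) : Prop :=
  ∀ Φ Ψ : Fin n → Set V, M.IsFlag Φ → M.IsFlag Ψ →
    Relation.ReflTransGen
      (fun X Y => M.IsFlag Y ∧ (∃ j, X j ≠ Y j ∧ ∀ l, l ≠ j → X l = Y l) ∧
        ∀ i, Φ i = Ψ i → Y i = Φ i) Φ Ψ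

/-- The strong path intersection property. -/
def SPIP (M : Maniplex n V) : Prop :=
  ∀ (A B : Set (Fin n)) (u v : V),
    M.ReachIn A u v → M.ReachIn B u v → M.ReachIn (A ∩ B) u v

/-- The weak path intersection property. -/
def WPIP (M : Maniplex n V) : Prop :=
  ∀ i j : Fin n, i < j → ∀ u v : V,
    M.ReachIn {c | i < c} u v → M.ReachIn {c | c < j} u v →
    M.ReachIn {c | i < c ∧ c < j} u v

end Maniplex
/-- `f` is a maximal chain ("flag") of a ranked poset with rank function `rk`,
listing one element of each rank `-1, 0, ..., n`. -/
def IsRankedChain (n : ℕ) {P : Type} [Preorder P] (rk : P → ℤ)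
    (f : Fin (n + 2) → P) : Prop :=
  StrictMono f ∧ ∀ m : Fin (n + 2), rk (f m) = ((m : ℕ) : ℤ) - 1

/-- An abstract `n`-polytope structure on a partially ordered set `P`. -/
structure APolytope (n : ℕ) (P : Type) [PartialOrder P] where
  rk : P → ℤ
  bot : P
  top : P
  bot_le : ∀ x, bot ≤ x
  le_top : ∀ x, x ≤ top
  rk_bot : rk bot = -1
  rk_top : rk top = (n : ℤ)
  rk_strictMono : ∀ x y : P, x < y → rk x < rk y
  chain_full : ∀ C : Set P, IsMaxChain (· ≤ ·) C →
    ∀ m : ℤ, -1 ≤ m → m ≤ (n : ℤ) → ∃! x, x ∈ C ∧ rk x = m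
  diamond : ∀ x z : P, x ≤ z → rk z = rk x + 2 →
    ∃ y₁ y₂ : P, y₁ ≠ y₂ ∧
      ∀ y : P, (x ≤ y ∧ y ≤ z ∧ rk y = rk x + 1) ↔ (y = y₁ ∨ y = y₂)
  sfc : ∀ Φ Ψ : Fin (n + 2) → P, IsRankedChain n rk Φ → IsRankedChain n rk Ψ →
    Relation.ReflTransGen
      (fun X Y => IsRankedChain n rk Y ∧
        (∃ j, X j ≠ Y j ∧ ∀ l, l ≠ j → X l = Y l) ∧
        ∀ m, Φ m = Ψ m → Y m = Φ m) Φ Ψ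

namespace APolytope

variable {n : ℕ} {P : Type} [PartialOrder P]

/-- The flags of the polytope: maximal chains, with one element of each rank. -/
def Flag (AP : APolytope n P) : Type :=
  {f : Fin (n + 2) → P // IsRankedChain n AP.rk f}

/-- Two flags are `i`-adjacent (joined by an edge of colour `i` in the flag
graph) iff they differ exactly in their face of rank `i`. -/
def FlagAdj (AP : APolytope n P) (i : Fin n) (X Y : AP.Flag) : Prop :=
  X.1 i.succ.castSucc ≠ Y.1 i.succ.castSucc ∧
    ∀ l, l ≠ i.succ.castSucc → X.1 l = Y.1 l

/-- There is a path in the flag graph from `X` to `Y` with edge colours in `A`. -/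
def FlagReachIn (AP : APolytope n P) (A : Set (Fin n)) (X Y : AP.Flag) : Prop :=
  Relation.ReflTransGen (fun X' Y' => ∃ i ∈ A, AP.FlagAdj i X' Y') X Y

end APolytope

/-!
The flag graph of a polytope has the weak path intersection property: a path with colours `> i`
fixes the faces of rank `≤ i` of a flag and a path with colours `< j` those of rank `≥ j`, so
strong flag connectivity joins its two ends by a path of flags that only changes ranks in
`(i, j)`; by the diamond condition, `i`-adjacent flags are unique and this path lifts to `M`.

Conversely, the weak property implies the strong one: given an `A`-path and a `B`-path with the
same ends, the colours outside `B` are removed from the `A`-path one at a time, a colour `b` in a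
maximal run `(p, q)` of consecutive colours of `A` by the weak property on `(p, b)` and on
`(b, q)`, as the other colours of `A` commute with the run.
In the poset `P_M` of faces of `M`, an element of rank `k` is a connected component of the
colours `≠ k`. The strong property gives the diamond condition, makes `v ↦ (faces containing v)`
a bijection onto the flags of `P_M`, and joins two vertices lying in the same faces of the ranks
in `K` by a path avoiding `K`, which is strong flag connectivity.
-/

theorem IsMaxChain.mem_of_forall_comparable {α : Type*} {r : α → α → Prop} {s : Set α} {a : α}
    (hs : IsMaxChain r s) (ha : ∀ b ∈ s, a ≠ b → r a b ∨ r b a) : a ∈ s :=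
  (hs.2 (hs.1.insert ha) (Set.subset_insert a s)).symm ▸ Set.mem_insert a s

namespace Maniplex

variable {n : ℕ} {V : Type} {M : Maniplex n V} {A B S T : Set (Fin n)} {u v w : V}

/-! ### Paths with restricted colours -/

theorem σ_σ_comm {a b : Fin n} (h : (a : ℕ) + 1 < b ∨ (b : ℕ) + 1 < a) (x : V) :
    M.σ a (M.σ b x) = M.σ b (M.σ a x) := by
  rcases h with h | h
  · exact (M.comm a b h x).1
  · exact (M.comm b a h x).1.symm

theorem reachIn_σ {i : Fin n} (hi : i ∈ A) (u : V) : M.ReachIn A u (M.σ i u) :=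
  .single ⟨i, hi, rfl⟩

theorem reachIn_univ (u v : V) : M.ReachIn Set.univ u v :=
  Relation.ReflTransGen.mono (fun _ _ ⟨i, h⟩ => ⟨i, trivial, h⟩) _ _ (M.conn u v)

namespace ReachIn

theorem trans (h₁ : M.ReachIn A u v) (h₂ : M.ReachIn A v w) : M.ReachIn A u w :=
  Relation.ReflTransGen.trans h₁ h₂

theorem symm (h : M.ReachIn A u v) : M.ReachIn A v u := by
  induction h with
  | refl => exact .refl
  | tail _ hs ih =>
    obtain ⟨i, hi, rfl⟩ := hs
    exact .head ⟨i, hi, M.invol i _⟩ ih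

theorem mono (hAB : A ⊆ B) (h : M.ReachIn A u v) : M.ReachIn B u v :=
  Relation.ReflTransGen.mono (fun _ _ ⟨i, hi, h⟩ => ⟨i, hAB hi, h⟩) _ _ h

theorem mono_setOf {P Q : Fin n → Prop} (h : M.ReachIn {c | P c} u v) (hPQ : ∀ c, P c → Q c) :
    M.ReachIn {c | Q c} u v :=
  h.mono hPQ

theorem eq_of_forall_notMem (h : M.ReachIn A u v) (hA : ∀ c, c ∉ A) : u = v := by
  induction h with
  | refl => rfl
  | tail _ hs => obtain ⟨i, hi, -⟩ := hs; exact absurd hi (hA i)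

theorem eq_or_eq_σ {i : Fin n} (h : M.ReachIn {i} u v) : v = u ∨ v = M.σ i u := by
  induction h with
  | refl => exact .inl rfl
  | tail _ hs ih =>
    obtain ⟨a, rfl, rfl⟩ := hs
    rcases ih with rfl | rfl
    · exact .inr rfl
    · exact .inl (M.invol a u)

theorem map_σ {c : Fin n} (hc : ∀ a ∈ A, ∀ x, M.σ a (M.σ c x) = M.σ c (M.σ a x))
    (h : M.ReachIn A u v) : M.ReachIn A (M.σ c u) (M.σ c v) := by
  induction h with
  | refl => exact .refl
  | tail _ hs ih =>
    obtain ⟨a, ha, rfl⟩ := hs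
    exact ih.tail ⟨a, ha, hc a ha _⟩

theorem exists_split (hA : A ⊆ S ∪ T)
    (hST : ∀ s ∈ S, ∀ t ∈ T, ∀ x, M.σ s (M.σ t x) = M.σ t (M.σ s x))
    (h : M.ReachIn A u v) : ∃ w, M.ReachIn S u w ∧ M.ReachIn T w v := by
  induction h using Relation.ReflTransGen.head_induction_on with
  | refl => exact ⟨_, .refl, .refl⟩
  | head hs _ ih =>
    obtain ⟨c, hc, rfl⟩ := hs
    obtain ⟨w, huw, hwv⟩ := ih
    rcases hA hc with hcS | hcT
    · exact ⟨w, .head ⟨c, hcS, rfl⟩ huw, hwv⟩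
    · refine ⟨M.σ c w, ?_, .head ⟨c, hcT, M.invol c w⟩ hwv⟩
      simpa only [M.invol] using huw.map_σ fun s hs => hST s hs c hcT

theorem exists_lt_gt {k : ℤ} (hA : ∀ c ∈ A, (c : ℤ) ≠ k) (h : M.ReachIn A u v) :
    ∃ w, M.ReachIn {c | c ∈ A ∧ (c : ℤ) < k} u w ∧ M.ReachIn {c | c ∈ A ∧ k < (c : ℤ)} w v :=
  h.exists_split (fun c hc => (hA c hc).lt_or_gt.imp (⟨hc, ·⟩) (⟨hc, ·⟩))
    fun _ hs _ ht => σ_σ_comm (by have := hs.2; have := ht.2; omega)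

theorem exists_gt_lt {k : ℤ} (hA : ∀ c ∈ A, (c : ℤ) ≠ k) (h : M.ReachIn A u v) :
    ∃ w, M.ReachIn {c | c ∈ A ∧ k < (c : ℤ)} u w ∧ M.ReachIn {c | c ∈ A ∧ (c : ℤ) < k} w v :=
  let ⟨w, hvw, hwu⟩ := h.symm.exists_lt_gt hA
  ⟨w, hwu.symm, hvw.symm⟩

-- `g` labels each vertex by a flag, whose entry at position `c + 1` (rank `c`) alone is changed
-- by `σ c`
theorem apply_eq {α : Type*} {g : V → Fin (n + 2) → α}
    (hg : ∀ x c l, l ≠ c.succ.castSucc → g (M.σ c x) l = g x l) (h : M.ReachIn A u v)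
    {m : Fin (n + 2)} (hm : ∀ c ∈ A, m ≠ c.succ.castSucc) : g u m = g v m := by
  induction h with
  | refl => rfl
  | tail _ hs ih =>
    obtain ⟨c, hc, rfl⟩ := hs
    exact ih.trans (hg _ c m (hm c hc)).symm

end ReachIn

/-! ### The strong path intersection property -/

theorem WPIP.reachIn_Ioo (hW : M.WPIP) {a b : ℤ} (hab : a < b)
    (h₁ : M.ReachIn {c | a < (c : ℤ)} u v) (h₂ : M.ReachIn {c | (c : ℤ) < b} u v) :
    M.ReachIn {c | a < (c : ℤ) ∧ (c : ℤ) < b} u v := by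
  by_cases ha : a < 0
  · exact h₂.mono_setOf fun c hc => ⟨by omega, hc⟩
  by_cases hb : (n : ℤ) ≤ b
  · exact h₁.mono_setOf fun c hc => ⟨hc, by omega⟩
  have hij : (⟨a.toNat, by omega⟩ : Fin n) < ⟨b.toNat, by omega⟩ := by
    simp only [Fin.mk_lt_mk]; omega
  refine ((hW _ _ hij u v (h₁.mono_setOf ?_) (h₂.mono_setOf ?_)).mono_setOf ?_) <;>
    intro c hc <;> simp only [Fin.lt_def] at hc ⊢ <;> omega

theorem WPIP.reachIn_Ioo_ne (hW : M.WPIP) {p q : ℤ} {b : Fin n} (hpb : p < b) (hbq : (b : ℤ) < q)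
    (h₁ : M.ReachIn {c | p < (c : ℤ) ∧ (c : ℤ) < q} u v) (h₂ : M.ReachIn {c | c ≠ b} u v) :
    M.ReachIn {c | p < (c : ℤ) ∧ (c : ℤ) < q ∧ c ≠ b} u v := by
  obtain ⟨w, huw, hwv⟩ := h₂.exists_lt_gt (k := b) fun c hc => by
    simp only [Set.mem_ofPred_eq] at hc; omega
  have hwv' : M.ReachIn {c | b < (c : ℤ) ∧ (c : ℤ) < q} w v := by
    refine hW.reachIn_Ioo hbq (hwv.mono_setOf fun c hc => hc.2) ?_
    exact (huw.symm.mono_setOf fun c hc => by omega).trans (h₁.mono_setOf fun c hc => hc.2)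
  have huw' : M.ReachIn {c | p < (c : ℤ) ∧ (c : ℤ) < b} u w := by
    refine hW.reachIn_Ioo hpb ?_ (huw.mono_setOf fun c hc => hc.2)
    exact (h₁.mono_setOf fun c hc => hc.1).trans (hwv'.symm.mono_setOf fun c hc => by omega)
  exact (huw'.mono_setOf fun c hc => ⟨hc.1, by omega, by omega⟩).trans
    (hwv'.mono_setOf fun c hc => ⟨by omega, hc.2, by omega⟩)

theorem WPIP.reachIn_inter_ne (hW : M.WPIP) {b : Fin n} (h₁ : M.ReachIn A u v)
    (h₂ : M.ReachIn {c | c ≠ b} u v) : M.ReachIn {c | c ∈ A ∧ c ≠ b} u v := by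
  by_cases hb : b ∉ A
  · exact h₁.mono fun c hc => ⟨hc, fun h => hb (h ▸ hc)⟩
  -- `(p, q)` is the maximal run of consecutive colours of `A` containing `b`
  obtain ⟨p, ⟨hpb, hpA⟩, hp⟩ := Int.exists_greatest_of_bdd
    (P := fun z => z < b ∧ ∀ c ∈ A, (c : ℤ) ≠ z) ⟨b, fun z hz => hz.1.le⟩
    ⟨-1, by omega, fun c _ => by omega⟩
  obtain ⟨q, ⟨hbq, hqA⟩, hq⟩ := Int.exists_least_of_bdd
    (P := fun z => (b : ℤ) < z ∧ ∀ c ∈ A, (c : ℤ) ≠ z) ⟨b, fun z hz => hz.1.le⟩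
    ⟨n, by omega, fun c _ => by omega⟩
  have hrun : ∀ c : Fin n, p < (c : ℤ) → (c : ℤ) < q → c ∈ A := by
    intro c hpc hcq
    by_contra hc
    have hcA : ∀ c' ∈ A, (c' : ℤ) ≠ c := fun c' hc' h =>
      hc ((show c' = c from Fin.ext (by omega)) ▸ hc')
    rcases lt_trichotomy (c : ℤ) b with h | h | h
    · exact absurd (hp c ⟨h, hcA⟩) (by omega)
    · exact hb ((show c = b from Fin.ext (by omega)) ▸ hc)
    · exact absurd (hq c ⟨h, hcA⟩) (by omega)
  obtain ⟨x, hux, hxv⟩ := h₁.exists_lt_gt hqA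
  obtain ⟨y, huy, hyx⟩ := hux.exists_lt_gt fun c hc => hpA c hc.1
  have hyx' : M.ReachIn {c | p < (c : ℤ) ∧ (c : ℤ) < q ∧ c ≠ b} y x := by
    refine hW.reachIn_Ioo_ne hpb hbq (hyx.mono_setOf fun c hc => ⟨hc.2, hc.1.2⟩) ?_
    exact ((huy.symm.mono_setOf fun c hc => by omega).trans h₂).trans
      (hxv.symm.mono_setOf fun c hc => by omega)
  refine ((huy.mono_setOf ?_).trans (hyx'.mono_setOf ?_)).trans (hxv.mono_setOf ?_)
  · exact fun c hc => ⟨hc.1.1, by omega⟩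
  · exact fun c hc => ⟨hrun c hc.1 hc.2.1, hc.2.2⟩
  · exact fun c hc => ⟨hc.1, by omega⟩

theorem WPIP.spip (hW : M.WPIP) : M.SPIP := by
  classical
  intro A B u v hA hB
  have key : ∀ K : Finset (Fin n), (∀ b ∈ K, b ∉ B) → M.ReachIn {c | c ∈ A ∧ c ∉ K} u v := by
    intro K
    induction K using Finset.induction_on with
    | empty => exact fun _ => hA.mono fun c hc => ⟨hc, Finset.notMem_empty c⟩
    | insert b K _ ih =>
      intro hK
      have hb : M.ReachIn {c | c ≠ b} u v :=
        hB.mono fun c hc hcb => hK b (Finset.mem_insert_self b K) (hcb ▸ hc)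
      refine (hW.reachIn_inter_ne (ih fun c hc => hK c (Finset.mem_insert_of_mem hc)) hb).mono ?_
      exact fun c hc => ⟨hc.1.1, by simp only [Finset.mem_insert, not_or]; exact ⟨hc.2, hc.1.2⟩⟩
  exact (key (Finset.univ.filter (· ∉ B)) (by simp)).mono fun c hc => ⟨hc.1, by simpa using hc.2⟩

theorem SPIP.reachIn_notMem_of_forall (hP : M.SPIP) (K : Finset (Fin n))
    (h : ∀ b ∈ K, M.ReachIn {c | c ≠ b} u v) : M.ReachIn {c | c ∉ K} u v := by
  classical
  induction K using Finset.induction_on with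
  | empty => exact (reachIn_univ u v).mono fun c _ => Finset.notMem_empty c
  | insert b K _ ih =>
    refine (hP _ _ u v (h b (Finset.mem_insert_self b K))
      (ih fun c hc => h c (Finset.mem_insert_of_mem hc))).mono fun c hc => ?_
    simp only [Finset.mem_insert, not_or]
    exact hc

theorem SPIP.eq_of_forall_reachIn (hP : M.SPIP) (h : ∀ b, M.ReachIn {c | c ≠ b} u v) : u = v :=
  (hP.reachIn_notMem_of_forall Finset.univ fun b _ => h b).eq_of_forall_notMem
    fun c hc => hc (Finset.mem_univ c)

theorem SPIP.not_reachIn_σ (hP : M.SPIP) (i : Fin n) (v : V) :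
    ¬ M.ReachIn {c | c ≠ i} v (M.σ i v) := fun h =>
  M.nofix i v ((hP _ _ _ _ h (reachIn_σ (Set.mem_singleton i) v)).eq_of_forall_notMem
    fun _ hc => hc.1 hc.2).symm

/-- The diamond condition: an `i`-face meeting the `(i-1)`-face of `w` (at `p`) and the
`(i+1)`-face of `w` (at `q`) is the `i`-face of `w` or of `σ i w`. -/
theorem SPIP.reachIn_ne_or_reachIn_ne_σ (hP : M.SPIP) {i : Fin n} {p q : V}
    (h₁ : M.ReachIn {c | (c : ℤ) ≠ i - 1} p w) (h₂ : M.ReachIn {c | (c : ℤ) ≠ i} p q)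
    (h₃ : M.ReachIn {c | (c : ℤ) ≠ i + 1} q w) :
    M.ReachIn {c | (c : ℤ) ≠ i} p w ∨ M.ReachIn {c | (c : ℤ) ≠ i} p (M.σ i w) := by
  obtain ⟨s, hps, hsq⟩ := h₂.exists_gt_lt fun c hc => hc
  obtain ⟨t, hqt, htw⟩ := h₃.exists_lt_gt fun c hc => hc
  have hst : M.ReachIn ({c | (c : ℤ) < i + 1} ∩ {c | (c : ℤ) ≠ i - 1}) s t :=
    hP _ _ _ _ ((hsq.mono_setOf fun c hc => by omega).trans (hqt.mono_setOf fun c hc => hc.2))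
      (((hps.symm.mono_setOf fun c hc => by omega).trans h₁).trans
        (htw.symm.mono_setOf fun c hc => by omega))
  have hsw : M.ReachIn {c | (c : ℤ) ≠ i - 1 ∧ (c : ℤ) ≠ i + 1} s w := by
    refine (hst.mono fun c hc => ?_).trans (htw.mono_setOf fun c hc => by omega)
    exact ⟨hc.2, by have : (c : ℤ) < i + 1 := hc.1; omega⟩
  -- all colours other than `i` on this path commute with `σ i`
  obtain ⟨x, hsx, hxw⟩ := hsw.exists_split (S := {c | (c : ℤ) ≠ i - 1 ∧ (c : ℤ) ≠ i ∧
      (c : ℤ) ≠ i + 1}) (T := {i})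
    (fun c hc => by
      by_cases hci : c = i
      · exact .inr hci
      · exact .inl ⟨hc.1, fun h => hci (Fin.ext (by omega)), hc.2⟩)
    (fun c hc t ht => by
      rw [Set.mem_singleton_iff.1 ht]
      exact σ_σ_comm (by have := hc.1; have := hc.2.1; have := hc.2.2; omega))
  have hpx : M.ReachIn {c | (c : ℤ) ≠ i} p x :=
    (hps.mono_setOf fun c hc => by omega).trans (hsx.mono_setOf fun c hc => hc.2.1)
  rcases hxw.eq_or_eq_σ with rfl | rfl
  · exact .inl hpx
  · exact .inr (by rwa [M.invol])

/-! ### The face poset `P_M` and its flags -/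

theorem face_eq_of_mem {i : Fin n} (h : u ∈ M.face i v) : M.face i v = M.face i u := by
  ext w
  exact ⟨fun hw => ReachIn.trans (ReachIn.symm h) hw, fun hw => ReachIn.trans h hw⟩

theorem mem_face_self (i : Fin n) (v : V) : v ∈ M.face i v := Relation.ReflTransGen.refl

theorem isFace_face (i : Fin n) (v : V) : M.IsFace i (M.face i v) := ⟨v, rfl⟩

theorem IsFace.eq_face {i : Fin n} {S : Set V} (hS : M.IsFace i S) (hv : v ∈ S) :
    S = M.face i v := by
  obtain ⟨w, rfl⟩ := hS
  exact face_eq_of_mem hv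

/-- The improper faces are given all vertices, so that every element of `P_M` of rank `k` is a
connected component of the colours other than `k` (`mem_verts_iff`). -/
def verts (M : Maniplex n V) : M.PFace → Set V
  | some (some F) => F.1.2
  | _ => Set.univ

theorem neg_one_le_prank (x : M.PFace) : -1 ≤ M.prank x := by
  rcases x with _ | _ | F <;> simp only [prank] <;> omega

theorem prank_le (x : M.PFace) : M.prank x ≤ n := by
  rcases x with _ | _ | F <;> simp only [prank] <;> omega

theorem verts_nonempty (x : M.PFace) : (M.verts x).Nonempty := by
  rcases x with _ | _ | F
  iterate 2 exact ⟨M.nonempty.some, trivial⟩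
  obtain ⟨v, hv⟩ := F.2
  exact ⟨v, show v ∈ F.1.2 by rw [hv]; exact mem_face_self _ v⟩

theorem mem_verts_iff {x : M.PFace} (hv : v ∈ M.verts x) :
    u ∈ M.verts x ↔ M.ReachIn {c | (c : ℤ) ≠ M.prank x} v u := by
  rcases x with _ | _ | F
  iterate 2
    exact iff_of_true trivial ((reachIn_univ v u).mono fun c _ => by
      simp only [prank, Set.mem_ofPred_eq]; omega)
  change u ∈ F.1.2 ↔ _
  rw [F.2.eq_face hv]
  exact ⟨fun h => h.mono_setOf fun c hc => by simp only [prank]; omega,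
    fun h => h.mono_setOf fun c hc => by simp only [prank] at hc; omega⟩

theorem ple_iff {x y : M.PFace} :
    M.ple x y ↔ M.prank x ≤ M.prank y ∧ (M.verts x ∩ M.verts y).Nonempty := by
  have hx := verts_nonempty x
  have hy := verts_nonempty y
  rcases x with _ | _ | F <;> rcases y with _ | _ | G <;>
    simp only [ple, faceLe, verts, prank, Set.univ_inter, Set.inter_univ, Fin.le_def,
      Nat.cast_le] at hx hy ⊢
  all_goals first
    | exact iff_of_true trivial ⟨by omega, ‹_›⟩
    | exact iff_of_false id fun h => by omega

theorem eq_of_prank_eq_of_mem {x y : M.PFace} (hr : M.prank x = M.prank y) (hx : v ∈ M.verts x)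
    (hy : v ∈ M.verts y) : x = y := by
  have hxy : M.verts x = M.verts y := by
    ext u
    rw [mem_verts_iff hx, mem_verts_iff hy, hr]
  have := prank_le x
  rcases x with _ | _ | F <;> rcases y with _ | _ | G <;> simp only [prank] at hr this
  all_goals first
    | rfl
    | omega
    | exact congrArg some (congrArg some (Subtype.ext (Prod.ext (Fin.ext (by omega)) hxy)))

def faceT (M : Maniplex n V) (i : Fin n) (v : V) : M.FaceT := ⟨(i, M.face i v), isFace_face i v⟩

/-- The element of `P_M` of rank `k` containing `v`, for `-1 ≤ k ≤ n`. -/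
def faceAt (M : Maniplex n V) (k : ℤ) (v : V) : M.PFace :=
  if h : 0 ≤ k ∧ k < n then some (some (M.faceT ⟨k.toNat, by omega⟩ v))
  else if k < 0 then none else some none

theorem prank_faceAt {k : ℤ} (h₁ : -1 ≤ k) (h₂ : k ≤ n) (v : V) : M.prank (M.faceAt k v) = k := by
  by_cases h : 0 ≤ k ∧ k < n
  · rw [show M.faceAt k v = some (some (M.faceT ⟨k.toNat, by omega⟩ v)) from dif_pos h]
    simp only [prank, faceT]; omega
  · rw [show M.faceAt k v = if k < 0 then none else some none from dif_neg h]
    split_ifs <;> simp only [prank] <;> omega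

theorem mem_verts_faceAt (k : ℤ) (v : V) : v ∈ M.verts (M.faceAt k v) := by
  by_cases h : 0 ≤ k ∧ k < n
  · rw [show M.faceAt k v = some (some (M.faceT ⟨k.toNat, by omega⟩ v)) from dif_pos h]
    exact mem_face_self _ v
  · rw [show M.faceAt k v = if k < 0 then none else some none from dif_neg h]
    split_ifs <;> trivial

theorem faceAt_eq_iff (i : Fin n) : M.faceAt i u = M.faceAt i v ↔ M.ReachIn {c | c ≠ i} u v := by
  have hr (x : V) : M.prank (M.faceAt i x) = i := prank_faceAt (by omega) (by omega) x
  refine ⟨fun h => ?_, fun h => eq_of_prank_eq_of_mem ((hr u).trans (hr v).symm)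
    ((mem_verts_iff (mem_verts_faceAt _ u)).2 ?_) (mem_verts_faceAt _ v)⟩
  · have := (mem_verts_iff (mem_verts_faceAt _ u)).1 (h ▸ mem_verts_faceAt _ v)
    exact this.mono_setOf fun c hc => by rw [hr] at hc; omega
  · exact h.mono_setOf fun c hc => by rw [hr]; omega

instance : PartialOrder M.PFace where
  le := M.ple
  le_refl x := ple_iff.2 ⟨le_rfl, by simpa only [Set.inter_self] using verts_nonempty x⟩
  le_trans x y z hxy hyz := by
    obtain ⟨hxy, a, hax, hay⟩ := ple_iff.1 hxy
    obtain ⟨hyz, b, hby, hbz⟩ := ple_iff.1 hyz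
    obtain ⟨t, hat, htb⟩ := ((mem_verts_iff hay).1 hby).exists_gt_lt fun c hc => hc
    refine ple_iff.2 ⟨hxy.trans hyz, t, (mem_verts_iff hax).2 ?_, (mem_verts_iff hbz).2 ?_⟩
    · exact hat.mono_setOf fun c hc => by omega
    · exact htb.symm.mono_setOf fun c hc => by omega
  le_antisymm x y hxy hyx := by
    obtain ⟨hr, a, hax, hay⟩ := ple_iff.1 hxy
    exact eq_of_prank_eq_of_mem (hr.antisymm (ple_iff.1 hyx).1) hax hay

theorem le_iff {x y : M.PFace} :
    x ≤ y ↔ M.prank x ≤ M.prank y ∧ (M.verts x ∩ M.verts y).Nonempty :=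
  ple_iff

theorem eq_of_le_of_prank_eq {x y : M.PFace} (h : x ≤ y) (hr : M.prank x = M.prank y) : x = y :=
  let ⟨_, _, hax, hay⟩ := le_iff.1 h
  eq_of_prank_eq_of_mem hr hax hay

theorem prank_strictMono : StrictMono M.prank := fun _ _ h =>
  (le_iff.1 h.le).1.lt_of_ne fun hr => h.ne (eq_of_le_of_prank_eq h.le hr)

instance : BoundedOrder M.PFace where
  bot := none
  bot_le x := by rcases x with _ | _ | F <;> trivial
  top := some none
  le_top x := by rcases x with _ | _ | F <;> trivial

theorem existsUnique_mem_prank_eq {C : Set M.PFace} (hC : IsMaxChain (· ≤ ·) C) {m : ℤ}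
    (h₁ : -1 ≤ m) (h₂ : m ≤ n) : ∃! x, x ∈ C ∧ M.prank x = m := by
  have hle : ∀ x ∈ C, ∀ y ∈ C, M.prank x ≤ M.prank y → x ≤ y := fun x hx y hy h =>
    (hC.1.total hx hy).elim id fun hyx =>
      (eq_of_le_of_prank_eq hyx ((le_iff.1 hyx).1.antisymm h)).ge
  refine existsUnique_of_exists_of_unique ?_ fun x y ⟨hx, hxm⟩ ⟨hy, hym⟩ =>
    eq_of_le_of_prank_eq (hle x hx y hy (by omega)) (by omega)
  obtain ⟨r₁, ⟨x₁, hx₁, rfl, hr₁⟩, hmax⟩ := Int.exists_greatest_of_bdd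
    (P := fun z => ∃ x ∈ C, M.prank x = z ∧ z ≤ m) ⟨m, fun z ⟨_, _, _, hz⟩ => hz⟩
    ⟨-1, ⊥, hC.bot_mem, rfl, h₁⟩
  obtain ⟨r₂, ⟨x₂, hx₂, rfl, hr₂⟩, hmin⟩ := Int.exists_least_of_bdd
    (P := fun z => ∃ x ∈ C, M.prank x = z ∧ m ≤ z) ⟨m, fun z ⟨_, _, _, hz⟩ => hz⟩
    ⟨n, ⊤, hC.top_mem, rfl, h₂⟩
  rcases hr₁.eq_or_lt with hm₁ | hm₁
  · exact ⟨x₁, hx₁, hm₁⟩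
  rcases hr₂.eq_or_lt with hm₂ | hm₂
  · exact ⟨x₂, hx₂, hm₂.symm⟩
  -- the face of rank `m` through a common vertex of `x₁ < x₂` is comparable with all of `C`
  obtain ⟨-, w, hw₁, hw₂⟩ := le_iff.1 (hle x₁ hx₁ x₂ hx₂ (by omega))
  have hG := prank_faceAt (M := M) h₁ h₂ w
  refine ⟨M.faceAt m w, hC.mem_of_forall_comparable fun y hy _ => ?_, hG⟩
  rcases le_total (M.prank y) m with h | h
  · refine .inr ((hle y hy x₁ hx₁ (hmax _ ⟨y, hy, rfl, h⟩)).trans ?_)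
    exact le_iff.2 ⟨by omega, w, hw₁, mem_verts_faceAt m w⟩
  · refine .inl (le_trans ?_ (hle x₂ hx₂ y hy (hmin _ ⟨y, hy, rfl, h⟩)))
    exact le_iff.2 ⟨by omega, w, mem_verts_faceAt m w, hw₂⟩

theorem SPIP.diamond (hP : M.SPIP) {x z : M.PFace} (hxz : x ≤ z)
    (hr : M.prank z = M.prank x + 2) :
    ∃ y₁ y₂ : M.PFace, y₁ ≠ y₂ ∧
      ∀ y, (x ≤ y ∧ y ≤ z ∧ M.prank y = M.prank x + 1) ↔ (y = y₁ ∨ y = y₂) := by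
  obtain ⟨-, w, hwx, hwz⟩ := le_iff.1 hxz
  have := neg_one_le_prank x
  have := prank_le z
  let i : Fin n := ⟨(M.prank x + 1).toNat, by omega⟩
  have hi : (i : ℤ) = M.prank x + 1 := by simp only [i]; omega
  have hrk (u : V) : M.prank (M.faceAt i u) = i := prank_faceAt (by omega) (by omega) u
  have := hrk w
  have := hrk (M.σ i w)
  have hσx : M.σ i w ∈ M.verts x :=
    (mem_verts_iff hwx).2 (reachIn_σ (by simp only [Set.mem_ofPred_eq]; omega) w)
  have hσz : M.σ i w ∈ M.verts z :=
    (mem_verts_iff hwz).2 (reachIn_σ (by simp only [Set.mem_ofPred_eq]; omega) w)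
  refine ⟨M.faceAt i w, M.faceAt i (M.σ i w),
    fun h => hP.not_reachIn_σ i w ((faceAt_eq_iff i).1 h), fun y => ⟨fun ⟨hxy, hyz, hry⟩ => ?_, ?_⟩⟩
  · obtain ⟨-, p, hpx, hpy⟩ := le_iff.1 hxy
    obtain ⟨-, q, hqy, hqz⟩ := le_iff.1 hyz
    have h₁ := (mem_verts_iff hpx).1 hwx
    have h₂ := (mem_verts_iff hpy).1 hqy
    have h₃ := (mem_verts_iff hqz).1 hwz
    rcases hP.reachIn_ne_or_reachIn_ne_σ (i := i) (h₁.mono_setOf fun c hc => by omega)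
      (h₂.mono_setOf fun c hc => by omega) (h₃.mono_setOf fun c hc => by omega) with h | h
    · refine .inl (eq_of_prank_eq_of_mem (by omega) ((mem_verts_iff hpy).2 ?_)
        (mem_verts_faceAt _ w))
      exact h.mono_setOf fun c hc => by omega
    · refine .inr (eq_of_prank_eq_of_mem (by omega) ((mem_verts_iff hpy).2 ?_)
        (mem_verts_faceAt _ _))
      exact h.mono_setOf fun c hc => by omega
  · rintro (rfl | rfl)
    · exact ⟨le_iff.2 ⟨by omega, w, hwx, mem_verts_faceAt _ w⟩,
        le_iff.2 ⟨by omega, w, mem_verts_faceAt _ w, hwz⟩, by omega⟩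
    · exact ⟨le_iff.2 ⟨by omega, _, hσx, mem_verts_faceAt _ _⟩,
        le_iff.2 ⟨by omega, _, mem_verts_faceAt _ _, hσz⟩, by omega⟩

def flagOf (M : Maniplex n V) (v : V) (m : Fin (n + 2)) : M.PFace := M.faceAt (m - 1) v

theorem prank_flagOf (v : V) (m : Fin (n + 2)) : M.prank (M.flagOf v m) = m - 1 :=
  prank_faceAt (by omega) (by omega) v

theorem flagOf_succ_castSucc (v : V) (c : Fin n) : M.flagOf v c.succ.castSucc = M.faceAt c v := by
  simp only [flagOf, Fin.val_castSucc, Fin.val_succ, Nat.cast_add, Nat.cast_one,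
    add_sub_cancel_right]

theorem isRankedChain_flagOf (v : V) : IsRankedChain n M.prank (M.flagOf v) := by
  refine ⟨fun m m' h => lt_of_le_of_ne ?_ fun he => ?_, prank_flagOf v⟩
  · rw [Fin.lt_def] at h
    exact le_iff.2 ⟨by rw [prank_flagOf, prank_flagOf]; omega, v, mem_verts_faceAt _ v,
      mem_verts_faceAt _ v⟩
  · have := congrArg M.prank he
    rw [prank_flagOf, prank_flagOf, Fin.lt_def] at *
    omega

theorem flagOf_σ_of_ne (d : Fin n) (x : V) {l : Fin (n + 2)} (hl : l ≠ d.succ.castSucc) :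
    M.flagOf (M.σ d x) l = M.flagOf x l := by
  have hdl : (d : ℤ) ≠ M.prank (M.flagOf x l) := by
    rw [prank_flagOf]
    intro h
    exact hl (Fin.ext (by simp only [Fin.val_castSucc, Fin.val_succ]; omega))
  refine eq_of_prank_eq_of_mem (by rw [prank_flagOf, prank_flagOf]) (mem_verts_faceAt _ _) ?_
  exact (mem_verts_iff (mem_verts_faceAt _ x)).2 (reachIn_σ hdl x)

theorem SPIP.flagOf_σ_ne (hP : M.SPIP) (d : Fin n) (x : V) :
    M.flagOf x d.succ.castSucc ≠ M.flagOf (M.σ d x) d.succ.castSucc := by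
  rw [flagOf_succ_castSucc, flagOf_succ_castSucc, Ne, faceAt_eq_iff]
  exact hP.not_reachIn_σ d x

theorem SPIP.flagOf_injective (hP : M.SPIP) : Function.Injective M.flagOf := fun u v h =>
  hP.eq_of_forall_reachIn fun c => by
    have := congrFun h c.succ.castSucc
    rwa [flagOf_succ_castSucc, flagOf_succ_castSucc, faceAt_eq_iff] at this

theorem exists_forall_mem_verts {f : Fin (n + 2) → M.PFace} (hf : IsRankedChain n M.prank f) :
    ∃ v, ∀ m, v ∈ M.verts (f m) := by
  suffices ∀ k (hk : k < n + 2), ∃ v, ∀ m : Fin (n + 2), (m : ℕ) ≤ k → v ∈ M.verts (f m) by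
    obtain ⟨v, hv⟩ := this (n + 1) (by omega)
    exact ⟨v, fun m => hv m (by omega)⟩
  intro k hk
  induction k with
  | zero =>
    obtain ⟨v, hv⟩ := verts_nonempty (f 0)
    exact ⟨v, fun m hm => by rwa [show m = 0 from Fin.ext (by simp only [Fin.val_zero]; omega)]⟩
  | succ k ih =>
    obtain ⟨v, hv⟩ := ih (by omega)
    have hk' : k < n + 2 := by omega
    have hlt : (⟨k, hk'⟩ : Fin (n + 2)) < ⟨k + 1, hk⟩ := Fin.mk_lt_mk.2 k.lt_succ_self
    obtain ⟨-, w, hwa, hwb⟩ := le_iff.1 (hf.1 hlt).le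
    have hra : M.prank (f ⟨k, hk'⟩) = k - 1 := hf.2 _
    have hrb : M.prank (f ⟨k + 1, hk⟩) = k := by rw [hf.2]; push_cast; ring
    -- the first leg keeps `x` in the faces of rank `< k`, the second one in `f (k + 1)`
    obtain ⟨x, hvx, hxw⟩ := ((mem_verts_iff (hv _ le_rfl)).1 hwa).exists_gt_lt fun c hc => hc
    refine ⟨x, fun m hm => ?_⟩
    rcases Nat.lt_or_ge k m with hkm | hkm
    · rw [show m = ⟨k + 1, hk⟩ from Fin.ext (by simp only; omega)]
      exact (mem_verts_iff hwb).2 (hxw.symm.mono_setOf fun c hc => by have := hc.2; omega)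
    · have hrm := hf.2 m
      exact (mem_verts_iff (hv m hkm)).2 (hvx.mono_setOf fun c hc => by have := hc.2; omega)

theorem exists_flagOf_eq {f : Fin (n + 2) → M.PFace} (hf : IsRankedChain n M.prank f) :
    ∃ v, M.flagOf v = f := by
  obtain ⟨v, hv⟩ := exists_forall_mem_verts hf
  exact ⟨v, funext fun m =>
    eq_of_prank_eq_of_mem (by rw [prank_flagOf, hf.2]) (mem_verts_faceAt _ v) (hv m)⟩

theorem SPIP.sfc (hP : M.SPIP) {Φ Ψ : Fin (n + 2) → M.PFace} (hΦ : IsRankedChain n M.prank Φ)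
    (hΨ : IsRankedChain n M.prank Ψ) :
    Relation.ReflTransGen (fun X Y => IsRankedChain n M.prank Y ∧
      (∃ j, X j ≠ Y j ∧ ∀ l, l ≠ j → X l = Y l) ∧ ∀ m, Φ m = Ψ m → Y m = Φ m) Φ Ψ := by
  classical
  obtain ⟨u, rfl⟩ := exists_flagOf_eq hΦ
  obtain ⟨v, rfl⟩ := exists_flagOf_eq hΨ
  let K := Finset.univ.filter fun c : Fin n =>
    M.flagOf u c.succ.castSucc = M.flagOf v c.succ.castSucc
  have huv : M.ReachIn {c | c ∉ K} u v := hP.reachIn_notMem_of_forall K fun c hc => by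
    have := (Finset.mem_filter.1 hc).2
    rwa [flagOf_succ_castSucc, flagOf_succ_castSucc, faceAt_eq_iff] at this
  suffices ∀ w, M.ReachIn {c | c ∉ K} u w → Relation.ReflTransGen (fun X Y =>
      IsRankedChain n M.prank Y ∧ (∃ j, X j ≠ Y j ∧ ∀ l, l ≠ j → X l = Y l) ∧
        ∀ m, M.flagOf u m = M.flagOf v m → Y m = M.flagOf u m) (M.flagOf u) (M.flagOf w) from
    this v huv
  intro w huw
  induction huw with
  | refl => exact .refl
  | tail huw hs ih =>
    obtain ⟨d, hd, rfl⟩ := hs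
    refine ih.tail ⟨isRankedChain_flagOf _, ⟨d.succ.castSucc, hP.flagOf_σ_ne d _,
      fun l hl => (flagOf_σ_of_ne d _ hl).symm⟩, fun m hm => ?_⟩
    refine (ReachIn.apply_eq (fun x c l hl => flagOf_σ_of_ne c x hl) (huw.tail ⟨d, hd, rfl⟩)
      fun c hc hmc => hc ?_).symm
    subst hmc
    exact Finset.mem_filter.2 ⟨Finset.mem_univ c, hm⟩

def toAPolytope (hP : M.SPIP) : APolytope n M.PFace where
  rk := M.prank
  bot := ⊥
  top := ⊤
  bot_le _ := bot_le
  le_top _ := le_top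
  rk_bot := rfl
  rk_top := rfl
  rk_strictMono _ _ h := prank_strictMono h
  chain_full _ hC _ := existsUnique_mem_prank_eq hC
  diamond _ _ := hP.diamond
  sfc _ _ := hP.sfc

theorem SPIP.exists_flagGraph_iso (hP : M.SPIP) :
    ∃ (P : Type) (inst : PartialOrder P) (AP : @APolytope n P inst)
      (β : V → @APolytope.Flag n P inst AP),
      Function.Bijective β ∧ ∀ (v : V) (i : Fin n),
        @APolytope.FlagAdj n P inst AP i (β v) (β (M.σ i v)) :=
  ⟨M.PFace, inferInstance, toAPolytope hP, fun v => ⟨M.flagOf v, isRankedChain_flagOf v⟩,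
    ⟨fun _ _ h => hP.flagOf_injective (congrArg Subtype.val h),
      fun f => (exists_flagOf_eq (M := M) f.2).imp fun _ hv => Subtype.ext hv⟩,
    fun v i => ⟨hP.flagOf_σ_ne i v, fun _ hl => (flagOf_σ_of_ne i v hl).symm⟩⟩

end Maniplex

/-! ### Flag graphs of abstract polytopes -/

namespace APolytope

variable {n : ℕ} {P : Type} [PartialOrder P] {AP : APolytope n P}

theorem eq_of_mem_diamond {x z y y₁ y₂ : P} (hxz : x ≤ z) (hr : AP.rk z = AP.rk x + 2)
    (hy : x ≤ y ∧ y ≤ z ∧ AP.rk y = AP.rk x + 1) (hy₁ : x ≤ y₁ ∧ y₁ ≤ z ∧ AP.rk y₁ = AP.rk x + 1)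
    (hy₂ : x ≤ y₂ ∧ y₂ ≤ z ∧ AP.rk y₂ = AP.rk x + 1) (h₁ : y ≠ y₁) (h₂ : y ≠ y₂) : y₁ = y₂ := by
  obtain ⟨a, b, -, hab⟩ := AP.diamond x z hxz hr
  rcases (hab y).1 hy with rfl | rfl <;> rcases (hab y₁).1 hy₁ with rfl | rfl <;>
    rcases (hab y₂).1 hy₂ with rfl | rfl <;> tauto

theorem flagAdj_unique {c : Fin n} {X Y Y' : AP.Flag} (h : AP.FlagAdj c X Y)
    (h' : AP.FlagAdj c X Y') : Y = Y' := by
  set m : Fin (n + 2) := c.succ.castSucc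
  have ha : c.castSucc.castSucc < m := Fin.castSucc_lt_castSucc_iff.2 c.castSucc_lt_succ
  have hb : m < c.succ.succ := Fin.castSucc_lt_succ
  have hmem : ∀ Z : AP.Flag, (∀ l, l ≠ m → X.1 l = Z.1 l) →
      X.1 c.castSucc.castSucc ≤ Z.1 m ∧ Z.1 m ≤ X.1 c.succ.succ ∧
        AP.rk (Z.1 m) = AP.rk (X.1 c.castSucc.castSucc) + 1 := fun Z hZ =>
    ⟨hZ _ ha.ne ▸ (Z.2.1 ha).le, hZ _ hb.ne' ▸ (Z.2.1 hb).le, by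
      rw [Z.2.2, X.2.2]; simp only [m, Fin.val_castSucc, Fin.val_succ]; push_cast; ring⟩
  have hYm : Y.1 m = Y'.1 m := eq_of_mem_diamond (X.2.1 (ha.trans hb)).le
    (by rw [X.2.2, X.2.2]; simp only [Fin.val_castSucc, Fin.val_succ]; push_cast; ring)
    (hmem X fun _ _ => rfl) (hmem Y h.2) (hmem Y' h'.2) h.1 h'.1
  exact Subtype.ext (funext fun l =>
    if hl : l = m then hl ▸ hYm else (h.2 l hl).symm.trans (h'.2 l hl))

theorem flagReachIn_of_forall_eq {A : Set (Fin n)} {Φ Ψ : AP.Flag}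
    (h : ∀ m, (∀ c ∈ A, m ≠ c.succ.castSucc) → Φ.1 m = Ψ.1 m) : AP.FlagReachIn A Φ Ψ := by
  suffices ∀ g, Relation.ReflTransGen (fun X Y => IsRankedChain n AP.rk Y ∧
      (∃ j, X j ≠ Y j ∧ ∀ l, l ≠ j → X l = Y l) ∧ ∀ m, Φ.1 m = Ψ.1 m → Y m = Φ.1 m) Φ.1 g →
      (∀ m, Φ.1 m = Ψ.1 m → g m = Φ.1 m) ∧ ∃ hg, AP.FlagReachIn A Φ ⟨g, hg⟩ from
    (this Ψ.1 (AP.sfc Φ.1 Ψ.1 Φ.2 Ψ.2)).2.elim fun _ => id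
  intro g hg
  induction hg with
  | refl => exact ⟨fun _ _ => rfl, Φ.2, .refl⟩
  | tail _ hs ih =>
    obtain ⟨hinv, hX, hΦX⟩ := ih
    obtain ⟨hY, ⟨j, hj, hjl⟩, hpres⟩ := hs
    -- a position where `Φ` and `Ψ` agree never changes, so `j` is one of the colours in `A`
    obtain ⟨c, hc, rfl⟩ : ∃ c ∈ A, j = c.succ.castSucc := by
      by_contra! hcon
      exact hj ((hinv j (h j hcon)).trans (hpres j (h j hcon)).symm)
    exact ⟨hpres, hY, hΦX.tail ⟨c, hc, hj, hjl⟩⟩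

end APolytope

namespace Maniplex

variable {n : ℕ} {V : Type} {M : Maniplex n V} {A : Set (Fin n)}

theorem exists_reachIn_of_flagReachIn {P : Type} [PartialOrder P] {AP : APolytope n P}
    {β : V → AP.Flag} (hadj : ∀ v i, AP.FlagAdj i (β v) (β (M.σ i v))) {u : V} {Y : AP.Flag}
    (h : AP.FlagReachIn A (β u) Y) : ∃ w, M.ReachIn A u w ∧ β w = Y := by
  induction h with
  | refl => exact ⟨u, .refl, rfl⟩
  | tail _ hs ih =>
    obtain ⟨w, huw, rfl⟩ := ih
    obtain ⟨c, hc, hadjc⟩ := hs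
    exact ⟨M.σ c w, huw.tail ⟨c, hc, rfl⟩, APolytope.flagAdj_unique (hadj w c) hadjc⟩

theorem wpip_of_flagAdj {P : Type} [PartialOrder P] (AP : APolytope n P) {β : V → AP.Flag}
    (hβ : Function.Injective β) (hadj : ∀ v i, AP.FlagAdj i (β v) (β (M.σ i v))) : M.WPIP := by
  intro i j hij u v h₁ h₂
  have hg (x : V) (c : Fin n) (l : Fin (n + 2)) (hl : l ≠ c.succ.castSucc) :
      (β (M.σ c x)).1 l = (β x).1 l := ((hadj x c).2 l hl).symm
  have hval (c : Fin n) : ((c.succ.castSucc : Fin (n + 2)) : ℕ) = c + 1 := rfl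
  have huv : ∀ m, (∀ c ∈ {c | i < c ∧ c < j}, m ≠ c.succ.castSucc) → (β u).1 m = (β v).1 m := by
    intro m hm
    by_cases hmi : (m : ℕ) ≤ i + 1
    · refine ReachIn.apply_eq (g := fun x => (β x).1) hg h₁ fun c hc hmc => ?_
      have := congrArg Fin.val hmc
      simp only [Set.mem_ofPred_eq, Fin.lt_def, hval] at hc this
      omega
    · refine ReachIn.apply_eq (g := fun x => (β x).1) hg h₂ fun c hc hmc => hm c ⟨?_, hc⟩ hmc
      have := congrArg Fin.val hmc
      simp only [Fin.lt_def, hval] at this ⊢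
      omega
  obtain ⟨w, huw, hw⟩ := exists_reachIn_of_flagReachIn hadj (APolytope.flagReachIn_of_forall_eq huv)
  exact hβ hw ▸ huw

end Maniplex

/-- A maniplex is polytopal (isomorphic, as an edge-coloured graph, to the flag
graph of an abstract polytope) if and only if it satisfies the (weak) path
intersection property. -/
theorem polytopal_iff_wpip {n : ℕ} {V : Type} (M : Maniplex n V) :
    (∃ (P : Type) (inst : PartialOrder P) (AP : @APolytope n P inst)
        (β : V → @APolytope.Flag n P inst AP),
        Function.Bijective β ∧
        ∀ (v : V) (i : Fin n),
          @APolytope.FlagAdj n P inst AP i (β v) (β (M.σ i v))) ↔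
      M.WPIP := by
  constructor
  · rintro ⟨P, inst, AP, β, hβ, hadj⟩
    exact Maniplex.wpip_of_flagAdj AP hβ.1 hadj
  · exact fun hW => hW.spip.exists_flagGraph_iso
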